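/- Let C be a category with finite limits and (E,M) a stable orthogonal factorization system on C such that M contains every monomorphism. Let f : A → B be a morphism in E with kernel pair k₁, k₂ : K → A, and let g : A → C be any morphism with g ∘ k₁ = g ∘ k₂. Then there exists a morphism h : B → C such that f ≫ h = g; moreover h is unique with this property. -/
import Mathlib


open CategoryTheory CategoryTheory.Limits

universe v u

/-- An orthogonal factorization system `(E, M)` on a category `C`:
two classes of morphisms, each closed under composition and containing the
isomorphisms, such that every morphism factors as (arrow in `E`) ≫ (arrow in `M`),
and every commutative square with left side in `E` and right side in `M`
has a unique diagonal filler. -/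
structure OrthFactSystem (C : Type u) [Category.{v} C] where
  E : MorphismProperty C
  M : MorphismProperty C
  E_iso : ∀ {X Y : C} (f : X ⟶ Y) [IsIso f], E f
  M_iso : ∀ {X Y : C} (f : X ⟶ Y) [IsIso f], M f
  E_comp : ∀ {X Y Z : C} (f : X ⟶ Y) (g : Y ⟶ Z), E f → E g → E (f ≫ g)
  M_comp : ∀ {X Y Z : C} (f : X ⟶ Y) (g : Y ⟶ Z), M f → M g → M (f ≫ g)
  fac : ∀ {X Y : C} (f : X ⟶ Y), ∃ (Z : C) (e : X ⟶ Z) (m : Z ⟶ Y),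
    E e ∧ M m ∧ e ≫ m = f
  lift : ∀ {X Y A B : C} (e : X ⟶ Y) (m : A ⟶ B) (u : X ⟶ A) (v : Y ⟶ B),
    E e → M m → u ≫ m = e ≫ v → ∃! d : Y ⟶ A, e ≫ d = u ∧ d ≫ m = v

/-- If every mono lies in `M`, then every arrow of `E` is an epimorphism. -/
lemma OrthFactSystem.epi_of_E {C : Type u} [Category.{v} C] [HasFiniteLimits C]
    (S : OrthFactSystem C)
    (hM : ∀ {A B : C} (m : A ⟶ B), Mono m → S.M m)
    {X Y : C} (e : X ⟶ Y) (he : S.E e) : Epi e := by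
  constructor
  intro Z a b hab
  have hcond : (equalizer.lift e hab) ≫ equalizer.ι a b = e ≫ 𝟙 Y := by simp
  obtain ⟨d, ⟨hd1, hd2⟩, _⟩ :=
    S.lift e (equalizer.ι a b) (equalizer.lift e hab) (𝟙 Y) he
      (hM _ inferInstance) hcond
  have : IsSplitEpi (equalizer.ι a b) := IsSplitEpi.mk' ⟨d, hd2⟩
  rw [← cancel_epi (equalizer.ι a b), equalizer.condition]

/-- Right cancellation for `E`. -/
lemma OrthFactSystem.E_cancel {C : Type u} [Category.{v} C]
    (S : OrthFactSystem C) {X Y Z : C} (e : X ⟶ Y) (p : Y ⟶ Z)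
    (he : S.E e) (hep : S.E (e ≫ p)) : S.E p := by
  obtain ⟨W, e₂, m₂, he₂, hm₂, hfac⟩ := S.fac p
  obtain ⟨d, ⟨hd1, hd2⟩, _⟩ :=
    S.lift (e ≫ p) m₂ (e ≫ e₂) (𝟙 Z) hep hm₂
      (by rw [Category.assoc, hfac, Category.comp_id])
  have hmd : m₂ ≫ d = 𝟙 W := by
    obtain ⟨d', ⟨_, _⟩, huniq⟩ :=
      S.lift (e ≫ e₂) m₂ (e ≫ e₂) m₂ (S.E_comp e e₂ he he₂) hm₂ rfl
    have h1 : m₂ ≫ d = d' := huniq (m₂ ≫ d)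
      ⟨by rw [← Category.assoc, Category.assoc e e₂ m₂, hfac, hd1],
       by rw [Category.assoc, hd2, Category.comp_id]⟩
    have h2 : 𝟙 W = d' := huniq (𝟙 W) ⟨Category.comp_id _, Category.id_comp _⟩
    rw [h1, ← h2]
  have : IsIso m₂ := ⟨d, hmd, hd2⟩
  rw [← hfac]
  exact S.E_comp e₂ m₂ he₂ (S.E_iso m₂)

/-- A factorization system is stable if the left class `E` is stable under
pullback: in any pullback square, the pullback of a morphism in `E` along an
arbitrary morphism again lies in `E`. -/
def OrthFactSystem.Stable {C : Type u} [Category.{v} C] (S : OrthFactSystem C) : Prop :=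
  ∀ {P X Y Z : C} (fst : P ⟶ X) (snd : P ⟶ Y) (f : X ⟶ Z) (g : Y ⟶ Z),
    IsPullback fst snd f g → S.E f → S.E snd

/-- Let `(E, M)` be a stable orthogonal factorization system on a
finitely complete category such that `M` contains every monomorphism. If `f : A ⟶ B`
lies in `E`, `k₁, k₂ : K ⟶ A` is its kernel pair, and `g : A ⟶ C` satisfies
`k₁ ≫ g = k₂ ≫ g`, then `g` factors through `f` via a unique `h : B ⟶ C`. -/
theorem exists_unique_factorization_through_E
    {C : Type u} [Category.{v} C] [HasFiniteLimits C]
    (S : OrthFactSystem C) (hS : S.Stable)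
    (hM : ∀ {A B : C} (m : A ⟶ B), Mono m → S.M m)
    {K A B D : C} (f : A ⟶ B) (hf : S.E f)
    (k₁ k₂ : K ⟶ A) (hk : IsPullback k₁ k₂ f f)
    (g : A ⟶ D) (hg : k₁ ≫ g = k₂ ≫ g) :
    ∃! h : B ⟶ D, f ≫ h = g := by
  classical
  -- Factor the pairing ⟨f, g⟩ as e ≫ m with e ∈ E, m ∈ M.
  set r : A ⟶ B ⨯ D := prod.lift f g with hr
  obtain ⟨I, e, m, he, hm, hem⟩ := S.fac r
  set p : I ⟶ B := m ≫ prod.fst with hp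
  set q : I ⟶ D := m ≫ prod.snd with hq
  have hfp : e ≫ p = f := by
    rw [hp, ← Category.assoc, hem, hr, prod.lift_fst]
  have hgq : e ≫ q = g := by
    rw [hq, ← Category.assoc, hem, hr, prod.lift_snd]
  have hpE : S.E p := S.E_cancel e p he (by rwa [hfp])
  -- Key lemma: if x ≫ p = y ≫ p then x ≫ m = y ≫ m.
  have key : ∀ {T : C} (x y : T ⟶ I), x ≫ p = y ≫ p → x ≫ m = y ≫ m := by
    intro T x y hxy
    -- first pullback of e along x
    have hpb1 : IsPullback (pullback.fst e x) (pullback.snd e x) e x :=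
      IsPullback.of_hasPullback e x
    have ht₁ : S.E (pullback.snd e x) := hS _ _ e x hpb1 he
    set t₁ := pullback.snd e x
    set a₁ := pullback.fst e x with ha₁
    -- second pullback of e along t₁ ≫ y
    have hpb2 : IsPullback (pullback.fst e (t₁ ≫ y)) (pullback.snd e (t₁ ≫ y))
        e (t₁ ≫ y) := IsPullback.of_hasPullback e (t₁ ≫ y)
    have hz₂ : S.E (pullback.snd e (t₁ ≫ y)) := hS _ _ e (t₁ ≫ y) hpb2 he
    set z₂ := pullback.snd e (t₁ ≫ y)
    set β := pullback.fst e (t₁ ≫ y) with hβ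
    set z : pullback e (t₁ ≫ y) ⟶ T := z₂ ≫ t₁ with hzdef
    have hzE : S.E z := S.E_comp z₂ t₁ hz₂ ht₁
    have hzepi : Epi z := S.epi_of_E hM z hzE
    set α : pullback e (t₁ ≫ y) ⟶ A := z₂ ≫ a₁ with hα
    have hαe : α ≫ e = z ≫ x := by
      rw [hα, Category.assoc, pullback.condition, hzdef, Category.assoc]
    have hβe : β ≫ e = z ≫ y := by
      rw [hβ, pullback.condition, hzdef, Category.assoc]
    have hαβf : α ≫ f = β ≫ f := by
      rw [← hfp]
      simp only [← Category.assoc]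
      rw [hαe, hβe]
      simp only [Category.assoc]
      rw [hxy]
    set c := hk.lift α β hαβf with hc
    have hck₁ : c ≫ k₁ = α := hk.lift_fst α β hαβf
    have hck₂ : c ≫ k₂ = β := hk.lift_snd α β hαβf
    have hαβg : α ≫ g = β ≫ g := by
      rw [← hck₁, ← hck₂, Category.assoc, Category.assoc, hg]
    have hαβr : α ≫ r = β ≫ r := by
      rw [hr]
      apply Limits.prod.hom_ext <;> simp only [Category.assoc, prod.lift_fst, prod.lift_snd]
      · exact hαβf
      · exact hαβg
    have : z ≫ x ≫ m = z ≫ y ≫ m := by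
      simp only [← Category.assoc]
      rw [← hαe, ← hβe]
      simp only [Category.assoc]
      rw [hem, hαβr]
    exact (cancel_epi z).mp this
  -- The pullback V of f and p.
  set v₁ := pullback.fst f p with hv₁
  set v₂ := pullback.snd f p with hv₂
  have hv₁E : S.E v₁ := hS v₂ v₁ p f (IsPullback.of_hasPullback f p).flip hpE
  have hsf : (𝟙 A) ≫ f = e ≫ p := by rw [Category.id_comp, hfp]
  set s : A ⟶ pullback f p := pullback.lift (𝟙 A) e hsf with hs
  have hs₁ : s ≫ v₁ = 𝟙 A := pullback.lift_fst _ _ _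
  have hs₂ : s ≫ v₂ = e := pullback.lift_snd _ _ _
  have hvm : v₂ ≫ m = v₁ ≫ (e ≫ m) := by
    have : v₂ ≫ p = (v₁ ≫ e) ≫ p := by
      rw [Category.assoc, hfp, ← pullback.condition]
    have := key v₂ (v₁ ≫ e) this
    rwa [Category.assoc] at this
  obtain ⟨d, ⟨hd1, hd2⟩, _⟩ := S.lift v₁ m v₂ (e ≫ m) hv₁E hm hvm
  have hde : d = e := by
    rw [← Category.id_comp d, ← hs₁, Category.assoc, hd1, hs₂]
  have hve : v₁ ≫ e = v₂ := by rw [← hde, hd1]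
  -- p is a monomorphism.
  have hpmono : Mono p := by
    constructor
    intro T x y hxy
    have hpb1 : IsPullback (pullback.fst e x) (pullback.snd e x) e x :=
      IsPullback.of_hasPullback e x
    have ht₁ : S.E (pullback.snd e x) := hS _ _ e x hpb1 he
    have ht₁epi : Epi (pullback.snd e x) := S.epi_of_E hM _ ht₁
    set t₁ := pullback.snd e x
    set a₁ := pullback.fst e x with ha₁
    have hcone : a₁ ≫ f = (t₁ ≫ y) ≫ p := by
      rw [← hfp]
      simp only [← Category.assoc]
      rw [pullback.condition]
      simp only [Category.assoc]
      rw [hxy]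
    set u' : pullback e x ⟶ pullback f p := pullback.lift a₁ (t₁ ≫ y) hcone
    have hu₁ : u' ≫ v₁ = a₁ := pullback.lift_fst _ _ _
    have hu₂ : u' ≫ v₂ = t₁ ≫ y := pullback.lift_snd _ _ _
    have : a₁ ≫ e = t₁ ≫ y := by
      rw [← hu₁, Category.assoc, hve, hu₂]
    have : t₁ ≫ x = t₁ ≫ y := by rw [← pullback.condition, this]
    exact (cancel_epi t₁).mp this
  -- p ∈ E ∩ M, hence invertible via the diagonal lift.
  obtain ⟨j, ⟨hj1, hj2⟩, _⟩ := S.lift p p (𝟙 I) (𝟙 B) hpE (hM p hpmono)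
    (by rw [Category.id_comp, Category.comp_id])
  have hmain : f ≫ j ≫ q = g :=
    calc f ≫ j ≫ q = e ≫ (p ≫ j) ≫ q := by
          rw [← hfp]; simp only [Category.assoc]
      _ = g := by rw [hj1, Category.id_comp, hgq]
  refine ⟨j ≫ q, hmain, ?_⟩
  intro h' hh'
  have hfepi : Epi f := S.epi_of_E hM f hf
  apply (cancel_epi f).mp
  rw [hh', hmain]
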